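/- There is an absolute constant C > 0 with the following property. For integers k ≥ 10 and j, j₁, j₂ ≥ 0, let f, g ∈ L²(ℝ²) be such that f(ξ,τ) is supported in {|ξ| ≤ 2} ∩ {(ξ,τ) : |τ-ξ³| ∈ I_{j₁}} and g(ξ,τ) is supported in {2^{k-1} ≤ |ξ| ≤ 2^{k+1}} ∩ {(ξ,τ) : |τ-ξ³| ∈ I_{j₂}}, where I_0 = [0,2] and I_m = [2^{m-1}, 2^{m+1}] for m ≥ 1. Then ‖ 𝟙_{ {2^{k-1} ≤ |ξ| ≤ 2^{k+1},\ |τ-ξ³| ∈ I_j} } · (f * g) ‖_{L²(ℝ²)} ≤ C 2^{-k} 2^{(j₁+j₂)/2} ‖f‖_{L²(ℝ²)} ‖g‖_{L²(ℝ²)}, where * denotes convolution on ℝ². -/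

import Mathlib

/-!
By Cauchy–Schwarz on the set `D_q` of `r` with `f r ≠ 0` and `g (q - r) ≠ 0`,
`|(f * g)(q)|² ≤ |D_q| ∫ |f r|² |g (q - r)|² dr`, and integrating in `q` (Tonelli and
translation invariance) gives `‖f * g‖₂ ≤ (sup_q |D_q|)^{1/2} ‖f‖₂ ‖g‖₂`.
To measure `D_q`, write `r = (ξ₁, τ₁)`, `q = (ξ, τ)` and slice at fixed `τ₁`. Since `|ξ₁| ≤ 2`,
`τ₁` stays within `8 + 2^{j₁+1}` of the origin. For fixed `τ₁`, the condition
`|τ - τ₁ - (ξ - ξ₁)³| ≤ 2^{j₂+1}` confines `ξ₁` to a set of length `≲ 2^{j₂ - 2k}`, because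
`|ξ - ξ₁| ≥ 2^{k-1}` and the cube expands by a factor `≥ 2^{2k-2}` there. Hence
`|D_q| ≲ 2^{j₁ + j₂ - 2k}`.
-/

open MeasureTheory

/-- The dyadic intervals `I_0 = [0,2]` and `I_m = [2^{m-1}, 2^{m+1}]` for `m ≥ 1`. -/
noncomputable def dyadicShell (m : ℕ) : Set ℝ :=
  if m = 0 then Set.Icc 0 2 else Set.Icc ((2 : ℝ) ^ (m - 1)) ((2 : ℝ) ^ (m + 1))

open Function Set
open scoped ENNReal

section CauchySchwarz

variable {α : Type*} [MeasurableSpace α] {μ : Measure α}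

theorem eLpNorm_two_sq {ε : Type*} [ENorm ε] (f : α → ε) :
    eLpNorm f 2 μ ^ 2 = ∫⁻ x, ‖f x‖ₑ ^ 2 ∂μ := by
  simpa [ENNReal.rpow_two] using eLpNorm_nnreal_pow_eq_lintegral (f := f) (μ := μ) two_ne_zero

theorem enorm_integral_sq_le_measure_support_mul {E : Type*} [NormedAddCommGroup E]
    [NormedSpace ℝ E] {h : α → E} (hh : AEStronglyMeasurable h μ) :
    ‖∫ x, h x ∂μ‖ₑ ^ 2 ≤ μ (support h) * ∫⁻ x, ‖h x‖ₑ ^ 2 ∂μ := by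
  set s := support h
  have hL1 : ‖∫ x, h x ∂μ‖ₑ ≤ eLpNorm h 2 (μ.restrict s) * μ s ^ (1 / 2 : ℝ) := by
    rw [← setIntegral_eq_integral_of_forall_compl_eq_zero fun x hx => notMem_support.mp hx]
    calc ‖∫ x in s, h x ∂μ‖ₑ ≤ eLpNorm h 1 (μ.restrict s) := by
          rw [eLpNorm_one_eq_lintegral_enorm]; exact enorm_integral_le_lintegral_enorm _
      _ ≤ eLpNorm h 2 (μ.restrict s) *
            μ.restrict s univ ^ (1 / (1 : ℝ≥0∞).toReal - 1 / (2 : ℝ≥0∞).toReal) :=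
          eLpNorm_le_eLpNorm_mul_rpow_measure_univ one_le_two hh.restrict
      _ = eLpNorm h 2 (μ.restrict s) * μ s ^ (1 / 2 : ℝ) := by
          norm_num [Measure.restrict_apply_univ]
  calc ‖∫ x, h x ∂μ‖ₑ ^ 2 ≤ (eLpNorm h 2 (μ.restrict s) * μ s ^ (1 / 2 : ℝ)) ^ 2 := by gcongr
    _ = μ s * ∫⁻ x in s, ‖h x‖ₑ ^ 2 ∂μ := by
        rw [mul_pow, eLpNorm_two_sq, ← ENNReal.rpow_natCast, ← ENNReal.rpow_mul]
        norm_num [mul_comm]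
    _ ≤ μ s * ∫⁻ x, ‖h x‖ₑ ^ 2 ∂μ := by gcongr; exact Measure.restrict_le_self

end CauchySchwarz

section Convolution

variable {G : Type*} [MeasurableSpace G] [AddGroup G] [MeasurableAdd₂ G] [MeasurableNeg G]
  {μ : Measure G} [SFinite μ] [μ.IsAddRightInvariant]

theorem AEMeasurable.mul_comp_sub {F H : G → ℝ≥0∞} (hF : AEMeasurable F μ)
    (hH : AEMeasurable H μ) :
    AEMeasurable (fun p : G × G => F p.2 * H (p.1 - p.2)) (μ.prod μ) :=
  (hF.comp_quasiMeasurePreserving Measure.quasiMeasurePreserving_snd).mul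
    (hH.comp_quasiMeasurePreserving (quasiMeasurePreserving_sub_of_right_invariant μ μ))

theorem lintegral_lintegral_mul_sub {F H : G → ℝ≥0∞} (hF : AEMeasurable F μ)
    (hH : AEMeasurable H μ) :
    ∫⁻ q, ∫⁻ r, F r * H (q - r) ∂μ ∂μ = (∫⁻ r, F r ∂μ) * ∫⁻ r, H r ∂μ := by
  rw [lintegral_lintegral_swap (hF.mul_comp_sub hH)]
  have hinner : ∀ r, ∫⁻ q, F r * H (q - r) ∂μ = F r * ∫⁻ q, H q ∂μ := fun r => by
    have hHr : AEMeasurable (fun q => H (q - r)) μ :=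
      hH.comp_quasiMeasurePreserving (measurePreserving_sub_right μ r).quasiMeasurePreserving
    rw [lintegral_const_mul'' _ hHr, lintegral_sub_right_eq_self H r]
  simp_rw [hinner]
  exact lintegral_mul_const'' _ hF

variable {𝕜 : Type*} [RCLike 𝕜]

theorem eLpNorm_two_integral_mul_sub_le {f g : G → 𝕜} {M : ℝ≥0∞}
    (hf : AEStronglyMeasurable f μ) (hg : AEStronglyMeasurable g μ)
    (hM : ∀ q, μ {r | f r ≠ 0 ∧ g (q - r) ≠ 0} ≤ M ^ 2) :
    eLpNorm (fun q => ∫ r, f r * g (q - r) ∂μ) 2 μ ≤ M * eLpNorm f 2 μ * eLpNorm g 2 μ := by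
  have hf2 : AEMeasurable (fun r => ‖f r‖ₑ ^ 2) μ := hf.enorm.pow_const 2
  have hg2 : AEMeasurable (fun r => ‖g r‖ₑ ^ 2) μ := hg.enorm.pow_const 2
  have hpointwise : ∀ q, ‖∫ r, f r * g (q - r) ∂μ‖ₑ ^ 2 ≤
      M ^ 2 * ∫⁻ r, ‖f r‖ₑ ^ 2 * ‖g (q - r)‖ₑ ^ 2 ∂μ := by
    intro q
    have hsupp : support (fun r => f r * g (q - r)) ⊆ {r | f r ≠ 0 ∧ g (q - r) ≠ 0} :=
      fun r hr => ⟨left_ne_zero_of_mul hr, right_ne_zero_of_mul hr⟩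
    calc ‖∫ r, f r * g (q - r) ∂μ‖ₑ ^ 2
        ≤ μ (support fun r => f r * g (q - r)) * ∫⁻ r, ‖f r * g (q - r)‖ₑ ^ 2 ∂μ :=
          enorm_integral_sq_le_measure_support_mul <| hf.mul <|
            hg.comp_quasiMeasurePreserving (quasiMeasurePreserving_sub_left_of_right_invariant μ q)
      _ ≤ M ^ 2 * ∫⁻ r, ‖f r‖ₑ ^ 2 * ‖g (q - r)‖ₑ ^ 2 ∂μ := by
          simp_rw [enorm_mul, mul_pow]
          gcongr
          exact (measure_mono hsupp).trans (hM q)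
  rw [← ENNReal.pow_le_pow_left_iff two_ne_zero, eLpNorm_two_sq, mul_pow, mul_pow,
    eLpNorm_two_sq, eLpNorm_two_sq, mul_assoc, ← lintegral_lintegral_mul_sub hf2 hg2,
    ← lintegral_const_mul'' _ (hf2.mul_comp_sub hg2).lintegral_prod_right']
  exact lintegral_mono hpointwise

end Convolution

theorem sq_mul_abs_sub_le_abs_pow_three_sub {M x y : ℝ} (hM : 0 ≤ M) (hx : M ≤ |x|)
    (hy : M ≤ |y|) : M ^ 2 * |x - y| ≤ |x ^ 3 - y ^ 3| := by
  have hx2 : M ^ 2 ≤ x ^ 2 := by simpa using pow_le_pow_left₀ hM hx 2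
  have hy2 : M ^ 2 ≤ y ^ 2 := by simpa using pow_le_pow_left₀ hM hy 2
  -- `2 (x² + xy + y²) = x² + y² + (x + y)²`
  have hq : M ^ 2 ≤ x ^ 2 + x * y + y ^ 2 := by nlinarith [sq_nonneg (x + y)]
  calc M ^ 2 * |x - y| ≤ |x - y| * (x ^ 2 + x * y + y ^ 2) := by
        rw [mul_comm]; exact mul_le_mul_of_nonneg_left hq (abs_nonneg _)
    _ = |x ^ 3 - y ^ 3| := by
        rw [show x ^ 3 - y ^ 3 = (x - y) * (x ^ 2 + x * y + y ^ 2) by ring, abs_mul,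
          abs_of_nonneg ((sq_nonneg M).trans hq)]

theorem volume_cubic_sublevel_le {M : ℝ} (hM : 0 < M) (A c δ : ℝ) :
    volume {t : ℝ | M ≤ |A - t| ∧ |c - (A - t) ^ 3| ≤ δ} ≤ ENNReal.ofReal (2 * δ / M ^ 2) := by
  refine (Real.volume_le_diam _).trans (Metric.ediam_le ?_)
  rintro t ⟨ht, htδ⟩ s ⟨hs, hsδ⟩
  rw [edist_dist, Real.dist_eq]
  refine ENNReal.ofReal_le_ofReal ((le_div_iff₀' (by positivity)).mpr ?_)
  calc M ^ 2 * |t - s| = M ^ 2 * |(A - s) - (A - t)| := by ring_nf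
    _ ≤ |(A - s) ^ 3 - (A - t) ^ 3| := sq_mul_abs_sub_le_abs_pow_three_sub hM.le hs ht
    _ = |(c - (A - t) ^ 3) - (c - (A - s) ^ 3)| := by ring_nf
    _ ≤ |c - (A - t) ^ 3| + |c - (A - s) ^ 3| := abs_sub _ _
    _ ≤ 2 * δ := by linarith

theorem MeasureTheory.Measure.prod_apply_le_mul_of_sections_le {α β : Type*} [MeasurableSpace α]
    [MeasurableSpace β] {μ : Measure α} {ν : Measure β} [SFinite μ] [SFinite ν]
    {S : Set (α × β)} (hS : MeasurableSet S) {T : Set β} (hST : ∀ p ∈ S, p.2 ∈ T) {a : ℝ≥0∞}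
    (ha : ∀ y ∈ T, μ ((fun x => (x, y)) ⁻¹' S) ≤ a) : μ.prod ν S ≤ a * ν T := by
  rw [Measure.prod_apply_symm hS]
  refine (lintegral_mono fun y => ?_).trans (lintegral_indicator_const_le T a)
  by_cases hy : y ∈ T
  · simpa [hy] using ha y hy
  · have hempty : (fun x => (x, y)) ⁻¹' S = ∅ :=
      eq_empty_of_forall_notMem fun x hx => hy (hST _ hx)
    simp [hempty]

def interactionSet (L M δ : ℝ) (q : ℝ × ℝ) : Set (ℝ × ℝ) :=
  {r | |r.2| ≤ L ∧ M ≤ |q.1 - r.1| ∧ |q.2 - r.2 - (q.1 - r.1) ^ 3| ≤ δ}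

theorem measurableSet_interactionSet (L M δ : ℝ) (q : ℝ × ℝ) :
    MeasurableSet (interactionSet L M δ q) :=
  show MeasurableSet ({r : ℝ × ℝ | |r.2| ≤ L} ∩ ({r | M ≤ |q.1 - r.1|} ∩
    {r | |q.2 - r.2 - (q.1 - r.1) ^ 3| ≤ δ})) from
  (measurableSet_le (by fun_prop) measurable_const).inter <|
    (measurableSet_le measurable_const (by fun_prop)).inter
      (measurableSet_le (by fun_prop) measurable_const)

theorem volume_interactionSet_le (L δ : ℝ) {M : ℝ} (hM : 0 < M) (q : ℝ × ℝ) :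
    volume (interactionSet L M δ q) ≤
      ENNReal.ofReal (2 * δ / M ^ 2) * ENNReal.ofReal (2 * L) := by
  rw [Measure.volume_eq_prod, show 2 * L = L - -L by ring, ← Real.volume_Icc]
  refine Measure.prod_apply_le_mul_of_sections_le (measurableSet_interactionSet L M δ q)
    (fun r hr => abs_le.mp hr.1) fun y _ => ?_
  exact (measure_mono fun t ht => ht.2).trans (volume_cubic_sublevel_le hM q.1 (q.2 - y) δ)

theorem dyadicShell_subset_Icc (m : ℕ) : dyadicShell m ⊆ Icc 0 (2 ^ (m + 1)) := by
  unfold dyadicShell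
  split_ifs with hm
  · simp [hm]
  · exact Icc_subset_Icc (by positivity) le_rfl

theorem mem_interactionSet_of_ne_zero {k j₁ j₂ : ℕ} {f g : ℝ × ℝ → ℂ}
    (hf : ∀ p : ℝ × ℝ, f p ≠ 0 → |p.1| ≤ 2 ∧ |p.2 - p.1 ^ 3| ∈ dyadicShell j₁)
    (hg : ∀ p : ℝ × ℝ, g p ≠ 0 → |p.1| ∈ Icc ((2 : ℝ) ^ (k - 1)) (2 ^ (k + 1)) ∧
      |p.2 - p.1 ^ 3| ∈ dyadicShell j₂)
    {q r : ℝ × ℝ} (hfr : f r ≠ 0) (hgr : g (q - r) ≠ 0) :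
    r ∈ interactionSet (8 + 2 ^ (j₁ + 1)) (2 ^ (k - 1)) (2 ^ (j₂ + 1)) q := by
  obtain ⟨hr₁, hr₂⟩ := hf r hfr
  obtain ⟨hqr₁, hqr₂⟩ := hg (q - r) hgr
  have hcube : |r.1 ^ 3| ≤ 8 := by
    rw [abs_pow]; exact (pow_le_pow_left₀ (abs_nonneg _) hr₁ 3).trans_eq (by norm_num)
  refine ⟨?_, hqr₁.1, (dyadicShell_subset_Icc j₂ hqr₂).2⟩
  calc |r.2| = |(r.2 - r.1 ^ 3) + r.1 ^ 3| := by ring_nf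
    _ ≤ |r.2 - r.1 ^ 3| + |r.1 ^ 3| := abs_add_le _ _
    _ ≤ 8 + 2 ^ (j₁ + 1) := by linarith [(dyadicShell_subset_Icc j₁ hr₂).2]

theorem interactionSet_bound_le_sq {k : ℕ} (hk : 1 ≤ k) (j₁ j₂ : ℕ) :
    2 * 2 ^ (j₂ + 1) / ((2 : ℝ) ^ (k - 1)) ^ 2 * (2 * (8 + 2 ^ (j₁ + 1))) ≤
      (32 * (2 : ℝ) ^ (-(k : ℝ)) * 2 ^ (((j₁ : ℝ) + j₂) / 2)) ^ 2 := by
  have hneg : (2 : ℝ) ^ (-(k : ℝ)) = (2 * 2 ^ (k - 1))⁻¹ := by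
    rw [Real.rpow_neg zero_le_two, Real.rpow_natCast, ← pow_succ', Nat.sub_add_cancel hk]
  have hhalf : ((2 : ℝ) ^ (((j₁ : ℝ) + j₂) / 2)) ^ 2 = 2 ^ j₁ * 2 ^ j₂ := by
    rw [← Real.rpow_natCast, ← Real.rpow_mul zero_le_two, Nat.cast_ofNat,
      div_mul_cancel₀ _ two_ne_zero, Real.rpow_add two_pos, Real.rpow_natCast, Real.rpow_natCast]
  have hj₁ : (1 : ℝ) ≤ 2 ^ j₁ := one_le_pow₀ one_le_two
  rw [mul_pow, mul_pow, hhalf, hneg, pow_succ _ j₁, pow_succ _ j₂]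
  field_simp
  linarith

/-- The low×high → high bilinear convolution estimate in the dyadically localized
Bourgain-space framework: with `f` localized to `|ξ| ≲ 1`, `|τ-ξ³| ∈ I_{j₁}` and `g`
localized to `|ξ| ∼ 2^k`, `|τ-ξ³| ∈ I_{j₂}`, the convolution restricted to frequency
`∼ 2^k` and modulation `∈ I_j` gains `2^{-k} 2^{(j₁+j₂)/2}`. -/
theorem low_high_convolution_estimate :
    ∃ C > (0 : ℝ), ∀ k j j₁ j₂ : ℕ, 10 ≤ k →
      ∀ f g : ℝ × ℝ → ℂ, MemLp f 2 volume → MemLp g 2 volume →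
        (∀ p : ℝ × ℝ, f p ≠ 0 → |p.1| ≤ 2 ∧ |p.2 - p.1 ^ 3| ∈ dyadicShell j₁) →
        (∀ p : ℝ × ℝ, g p ≠ 0 →
          |p.1| ∈ Set.Icc ((2 : ℝ) ^ (k - 1)) ((2 : ℝ) ^ (k + 1)) ∧
          |p.2 - p.1 ^ 3| ∈ dyadicShell j₂) →
        eLpNorm
            (Set.indicator
              {q : ℝ × ℝ | |q.1| ∈ Set.Icc ((2 : ℝ) ^ (k - 1)) ((2 : ℝ) ^ (k + 1)) ∧
                |q.2 - q.1 ^ 3| ∈ dyadicShell j}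
              (fun q : ℝ × ℝ => ∫ r : ℝ × ℝ, f r * g (q - r))) 2 volume ≤
          ENNReal.ofReal
              (C * (2 : ℝ) ^ (-(k : ℝ)) * (2 : ℝ) ^ (((j₁ : ℝ) + (j₂ : ℝ)) / 2)) *
            eLpNorm f 2 volume * eLpNorm g 2 volume := by
  refine ⟨32, by norm_num, fun k j j₁ j₂ hk f g hf hg hfs hgs => ?_⟩
  refine (eLpNorm_indicator_le _).trans <|
    eLpNorm_two_integral_mul_sub_le hf.1 hg.1 fun q => ?_
  calc volume {r | f r ≠ 0 ∧ g (q - r) ≠ 0}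
      ≤ volume (interactionSet (8 + 2 ^ (j₁ + 1)) (2 ^ (k - 1)) (2 ^ (j₂ + 1)) q) :=
        measure_mono fun r ⟨hfr, hgr⟩ => mem_interactionSet_of_ne_zero hfs hgs hfr hgr
    _ ≤ ENNReal.ofReal (2 * 2 ^ (j₂ + 1) / (2 ^ (k - 1)) ^ 2) *
          ENNReal.ofReal (2 * (8 + 2 ^ (j₁ + 1))) :=
        volume_interactionSet_le _ _ (by positivity) q
    _ ≤ ENNReal.ofReal (32 * 2 ^ (-(k : ℝ)) * 2 ^ (((j₁ : ℝ) + j₂) / 2)) ^ 2 := by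
        rw [← ENNReal.ofReal_mul (by positivity), ← ENNReal.ofReal_pow (by positivity)]
        exact ENNReal.ofReal_le_ofReal (interactionSet_bound_le_sq (by omega) j₁ j₂)
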